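/- Let r, s, t ≥ 1 and let α: [s] → [r] and β: [t] → [r] satisfy |α(i+1)−α(i)| ≤ 1 for all i and |β(j+1)−β(j)| ≤ 1 for all j (relation-preserving maps, not necessarily surjective). Color a cell (i,j) of the chessboard [s]×[t] black iff α(i) = β(j). If α(1) = 1, β(1) = 1, and the range of β is contained in the range of α, then there is a black 8-path from (1,1) to the set [s]×{t}. -/

import Mathlib

/-- The chessboard `[s] × [t]`. -/
def board (s t : ℕ) : Set (ℕ × ℕ) :=
  {c | 1 ≤ c.1 ∧ c.1 ≤ s ∧ 1 ≤ c.2 ∧ c.2 ≤ t}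

/-- 8-adjacency of cells. -/
def adj8 (c d : ℕ × ℕ) : Prop :=
  c ≠ d ∧ Nat.dist c.1 d.1 ≤ 1 ∧ Nat.dist c.2 d.2 ≤ 1

/-- There is a path of cells, each satisfying `good`, from the set `A` to the
set `B`, with consecutive cells related by `adj`. -/
def PathBetween (adj : ℕ × ℕ → ℕ × ℕ → Prop) (good : ℕ × ℕ → Prop)
    (A B : Set (ℕ × ℕ)) : Prop :=
  ∃ (L : ℕ) (σ : ℕ → ℕ × ℕ), σ 0 ∈ A ∧ σ L ∈ B ∧
    (∀ i ≤ L, good (σ i)) ∧ ∀ i < L, adj (σ i) (σ (i + 1))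

/-! Black cells form a graph under 8-adjacency. Deleting a repeated value of `α` (a duplicated
column) or of `β` (a duplicated row) loses nothing: a path in the smaller board lifts back through
the duplicate. So we may assume that both walks move by exactly `±1` at every step, and cut `α` off
where it attains its maximum, which dominates `β` because `rng β ⊆ rng α`. Black cells then touch
only diagonally. Reflecting in a row, a column, or the cell itself shows that every black cell
outside the top row has an even number of black neighbours, except the corner `(1, 1)`, whose only
one is `(2, 2)`. By the handshake lemma the component of `(1, 1)` contains another vertex of odd
degree, and it must lie in the top row. -/

namespace SimpleGraph

variable {V : Type*} (G : SimpleGraph V)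

def componentGraph (v : V) : SimpleGraph V where
  Adj a b := G.Adj a b ∧ G.Reachable v a
  symm := ⟨fun _ _ h => ⟨h.1.symm, h.2.trans h.1.reachable⟩⟩
  loopless := ⟨fun a h => G.loopless.irrefl a h.1⟩

theorem exists_reachable_ne_odd_degree [Fintype V] [DecidableRel G.Adj] {v : V}
    (hv : Odd (G.degree v)) : ∃ w, w ≠ v ∧ G.Reachable v w ∧ Odd (G.degree w) := by
  classical
  have hdeg (w : V) :
      (G.componentGraph v).degree w = if G.Reachable v w then G.degree w else 0 := by
    simp only [← card_neighborFinset_eq_degree]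
    split_ifs with hw
    · congr 1; ext u; simp only [mem_neighborFinset]; exact and_iff_left hw
    · exact Finset.card_eq_zero.2 <| Finset.eq_empty_of_forall_notMem fun u hu =>
        hw ((mem_neighborFinset _ _ _).1 hu).2
  obtain ⟨w, hwv, hw⟩ := (G.componentGraph v).exists_ne_odd_degree_of_exists_odd_degree v
    (by rwa [hdeg, if_pos (Reachable.refl v)])
  rw [hdeg] at hw
  split_ifs at hw with hvw
  · exact ⟨w, hwv, hvw, hw⟩
  · exact absurd hw (by decide)

end SimpleGraph

theorem PathBetween.of_reflTransGen {adj : ℕ × ℕ → ℕ × ℕ → Prop} {good : ℕ × ℕ → Prop}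
    {a b : ℕ × ℕ} {B : Set (ℕ × ℕ)}
    (h : Relation.ReflTransGen (fun c d => good c ∧ good d ∧ adj c d) a b) (ha : good a)
    (hb : b ∈ B) : PathBetween adj good {a} B := by
  induction h generalizing B with
  | refl => exact ⟨0, fun _ => a, rfl, hb, fun _ _ => ha, fun _ h => absurd h (Nat.not_lt_zero _)⟩
  | @tail c d _ hcd ih =>
    obtain ⟨L, σ, h0, hL, hgood, hadj⟩ := ih (Set.mem_singleton c)
    rw [Set.mem_singleton_iff] at hL
    refine ⟨L + 1, fun k => if k ≤ L then σ k else d, by simpa using h0, by simpa using hb,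
      fun k hk => ?_, fun k hk => ?_⟩
    · by_cases hkL : k ≤ L
      · simpa [hkL] using hgood k hkL
      · simpa [hkL] using hcd.2.1
    · by_cases hkL : k + 1 ≤ L
      · simpa [hkL, show k ≤ L by omega] using hadj k hkL
      · obtain rfl : k = L := by omega
        simpa [hL] using hcd.2.2

theorem adj8_symm {c d : ℕ × ℕ} (h : adj8 c d) : adj8 d c :=
  ⟨h.1.symm, Nat.dist_comm c.1 d.1 ▸ h.2.1, Nat.dist_comm c.2 d.2 ▸ h.2.2⟩

section Board

variable (α β : ℕ → ℕ) (s t : ℕ)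

def Black (c : ℕ × ℕ) : Prop := c ∈ board s t ∧ α c.1 = β c.2

def blackGraph : SimpleGraph (ℕ × ℕ) where
  Adj c d := Black α β s t c ∧ Black α β s t d ∧ adj8 c d
  symm := ⟨fun _ _ h => ⟨h.2.1, h.1, adj8_symm h.2.2⟩⟩
  loopless := ⟨fun _ h => h.2.2.1 rfl⟩

variable {α β s t}

theorem Black.swap {c : ℕ × ℕ} (h : Black α β s t c) : Black β α t s c.swap :=
  ⟨⟨h.1.2.2.1, h.1.2.2.2, h.1.1, h.1.2.1⟩, h.2.symm⟩

def blackGraphSwap : blackGraph α β s t →g blackGraph β α t s where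
  toFun := Prod.swap
  map_rel' h := ⟨Black.swap h.1, Black.swap h.2.1,
    fun he => h.2.2.1 (Prod.swap_injective he), h.2.2.2.2, h.2.2.2.1⟩

theorem blackGraph_mono {s' : ℕ} (hs : s ≤ s') : blackGraph α β s t ≤ blackGraph α β s' t :=
  fun _ _ h => ⟨⟨⟨h.1.1.1, h.1.1.2.1.trans hs, h.1.1.2.2⟩, h.1.2⟩,
    ⟨⟨h.2.1.1.1, h.2.1.1.2.1.trans hs, h.2.1.1.2.2⟩, h.2.1.2⟩, h.2.2⟩

theorem Black.of_reachable {a b : ℕ × ℕ} (h : (blackGraph α β s t).Reachable a b)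
    (ha : Black α β s t a) : Black α β s t b := by
  rw [SimpleGraph.reachable_iff_reflTransGen] at h
  induction h with
  | refl => exact ha
  | tail _ hcd _ => exact hcd.2.1

theorem pathBetween_of_reachable {a b : ℕ × ℕ} {B : Set (ℕ × ℕ)}
    (h : (blackGraph α β s t).Reachable a b) (ha : Black α β s t a) (hb : b ∈ B) :
    PathBetween adj8 (Black α β s t) {a} B :=
  .of_reflTransGen ((SimpleGraph.reachable_iff_reflTransGen a b).1 h) ha hb

end Board

section Walk

def IsLazyWalk (f : ℕ → ℕ) (n : ℕ) : Prop :=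
  ∀ i, 1 ≤ i → i + 1 ≤ n → Nat.dist (f (i + 1)) (f i) ≤ 1

def IsWalk (f : ℕ → ℕ) (n : ℕ) : Prop :=
  ∀ i, 1 ≤ i → i + 1 ≤ n → Nat.dist (f (i + 1)) (f i) = 1

def succAbove (p k : ℕ) : ℕ := if k < p then k else k + 1

variable {f : ℕ → ℕ} {n p : ℕ}

theorem IsLazyWalk.isWalk (hf : IsLazyWalk f n) (h : ∀ i, 1 ≤ i → i + 1 ≤ n → f (i + 1) ≠ f i) :
    IsWalk f n := fun i hi hin =>
  le_antisymm (hf i hi hin) (Nat.pos_of_ne_zero fun h0 => h i hi hin (Nat.eq_of_dist_eq_zero h0))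

theorem IsWalk.mono {m : ℕ} (hf : IsWalk f n) (hmn : m ≤ n) : IsWalk f m :=
  fun i hi him => hf i hi (him.trans hmn)

theorem IsWalk.dist_pred (hf : IsWalk f n) {k : ℕ} (hk : 2 ≤ k) (hkn : k ≤ n) :
    Nat.dist (f k) (f (k - 1)) = 1 := by
  simpa [Nat.sub_add_cancel (by omega : 1 ≤ k)] using hf (k - 1) (by omega) (by omega)

theorem IsLazyWalk.comp_succAbove (hf : IsLazyWalk f n) (hp : f (p + 1) = f p) :
    IsLazyWalk (f ∘ succAbove (p + 1)) (n - 1) := by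
  intro k hk hkn
  simp only [Function.comp, succAbove]
  split_ifs with h1 h2 h2
  · exact hf k hk (by omega)
  · omega
  · obtain rfl : k = p := by omega
    rw [← hp]
    exact hf (k + 1) (by omega) (by omega)
  · exact hf (k + 1) (by omega) (by omega)

theorem succAbove_mem_Icc {k : ℕ} (hk : k ∈ Finset.Icc 1 (n - 1)) :
    succAbove p k ∈ Finset.Icc 1 n := by
  simp only [Finset.mem_Icc, succAbove] at *
  split_ifs <;> omega

theorem exists_succAbove_eq (hp : f (p + 1) = f p) (hp1 : 1 ≤ p) (hpn : p + 1 ≤ n) {i : ℕ}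
    (hi : i ∈ Finset.Icc 1 n) : ∃ k ∈ Finset.Icc 1 (n - 1), f (succAbove (p + 1) k) = f i := by
  rw [Finset.mem_Icc] at hi
  rcases lt_trichotomy i (p + 1) with h | rfl | h
  · exact ⟨i, Finset.mem_Icc.2 ⟨hi.1, by omega⟩, by simp [succAbove, h]⟩
  · exact ⟨p, Finset.mem_Icc.2 ⟨hp1, by omega⟩, by simp [succAbove, hp]⟩
  · refine ⟨i - 1, Finset.mem_Icc.2 ⟨by omega, by omega⟩, ?_⟩
    rw [succAbove, if_neg (by omega), Nat.sub_add_cancel (by omega)]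

end Walk

section Plateau

variable {α β : ℕ → ℕ} {s t p : ℕ}

theorem Black.of_comp_succAbove {c : ℕ × ℕ}
    (h : Black (α ∘ succAbove p) β (s - 1) t c) :
    Black α β s t (Prod.map (succAbove p) id c) := by
  have := succAbove_mem_Icc (p := p) (Finset.mem_Icc.2 ⟨h.1.1, h.1.2.1⟩)
  rw [Finset.mem_Icc] at this
  exact ⟨⟨this.1, this.2, h.1.2.2⟩, h.2⟩

theorem reachable_of_adj_comp_succAbove_of_fst_eq (hp : α (p + 1) = α p) {c d : ℕ × ℕ}
    (h : (blackGraph (α ∘ succAbove (p + 1)) β (s - 1) t).Adj c d) (hc : c.1 = p)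
    (hd : d.1 = p + 1) :
    (blackGraph α β s t).Reachable (Prod.map (succAbove (p + 1)) id c)
      (Prod.map (succAbove (p + 1)) id d) := by
  obtain ⟨c1, c2⟩ := c
  obtain ⟨d1, d2⟩ := d
  obtain ⟨hc', hd', hcd⟩ := h
  simp only at hc hd
  subst hc hd
  have hc'' := Black.of_comp_succAbove hc'
  have hd'' := Black.of_comp_succAbove hd'
  simp only [Prod.map, succAbove, lt_add_iff_pos_right, zero_lt_one, if_true,
    lt_irrefl, if_false, id] at hc'' hd'' ⊢
  have hds := hd''.1.2.1
  -- go through the duplicate column `c1 + 1`, which carries the same values as column `c1`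
  have hm : Black α β s t (c1 + 1, c2) :=
    ⟨⟨by omega, by omega, hc''.1.2.2⟩, hp.trans hc''.2⟩
  have h1 : (blackGraph α β s t).Adj (c1, c2) (c1 + 1, c2) :=
    ⟨hc'', hm, by simp [adj8, Nat.dist]⟩
  have h2 : (blackGraph α β s t).Adj (c1 + 1, c2) (c1 + 1 + 1, d2) := by
    refine ⟨hm, hd'', ?_⟩
    simp only [adj8, Nat.dist, ne_eq, Prod.ext_iff] at hcd ⊢
    omega
  exact h1.reachable.trans h2.reachable

theorem reachable_of_adj_comp_succAbove (hp : α (p + 1) = α p) {c d : ℕ × ℕ}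
    (h : (blackGraph (α ∘ succAbove (p + 1)) β (s - 1) t).Adj c d) :
    (blackGraph α β s t).Reachable (Prod.map (succAbove (p + 1)) id c)
      (Prod.map (succAbove (p + 1)) id d) := by
  by_cases h1 : c.1 = p ∧ d.1 = p + 1
  · exact reachable_of_adj_comp_succAbove_of_fst_eq hp h h1.1 h1.2
  by_cases h2 : d.1 = p ∧ c.1 = p + 1
  · exact (reachable_of_adj_comp_succAbove_of_fst_eq hp h.symm h2.1 h2.2).symm
  refine SimpleGraph.Adj.reachable ⟨Black.of_comp_succAbove h.1,
    Black.of_comp_succAbove h.2.1, ?_⟩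
  obtain ⟨c1, c2⟩ := c
  obtain ⟨d1, d2⟩ := d
  have hcd := h.2.2
  simp only [adj8, Nat.dist, ne_eq, Prod.ext_iff, Prod.map, succAbove, id] at hcd h1 h2 ⊢
  split_ifs <;> omega

theorem reachable_comp_succAbove (hp : α (p + 1) = α p) {a b : ℕ × ℕ}
    (h : (blackGraph (α ∘ succAbove (p + 1)) β (s - 1) t).Reachable a b) :
    (blackGraph α β s t).Reachable (Prod.map (succAbove (p + 1)) id a)
      (Prod.map (succAbove (p + 1)) id b) := by
  rw [SimpleGraph.reachable_iff_reflTransGen] at h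
  induction h with
  | refl => rfl
  | tail _ hcd ih => exact ih.trans (reachable_of_adj_comp_succAbove hp hcd)

theorem reachable_comp_succAbove_snd (hp : β (p + 1) = β p) {a b : ℕ × ℕ}
    (h : (blackGraph α (β ∘ succAbove (p + 1)) s (t - 1)).Reachable a b) :
    (blackGraph α β s t).Reachable (Prod.map id (succAbove (p + 1)) a)
      (Prod.map id (succAbove (p + 1)) b) :=
  (reachable_comp_succAbove hp (h.map blackGraphSwap)).map blackGraphSwap

end Plateau

section Diagonal

open Finset

def diagNeighbors (c : ℕ × ℕ) : Finset (ℕ × ℕ) :=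
  {(c.1 - 1, c.2 - 1), (c.1 - 1, c.2 + 1), (c.1 + 1, c.2 - 1), (c.1 + 1, c.2 + 1)}

variable {P : ℕ × ℕ → Prop} [DecidablePred P] {c : ℕ × ℕ}

theorem card_filter_diagNeighbors : #{d ∈ diagNeighbors c | P d} =
    (if P (c.1 - 1, c.2 - 1) then 1 else 0) + (if P (c.1 - 1, c.2 + 1) then 1 else 0) +
      (if P (c.1 + 1, c.2 - 1) then 1 else 0) + (if P (c.1 + 1, c.2 + 1) then 1 else 0) := by
  rw [card_filter, diagNeighbors, sum_insert, sum_insert, sum_insert, sum_singleton]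
  · ring
  all_goals simp [Prod.ext_iff]

theorem even_card_filter_diagNeighbors_of_fst (h : ∀ b, P (c.1 - 1, b) ↔ P (c.1 + 1, b)) :
    Even #{d ∈ diagNeighbors c | P d} := by
  rw [card_filter_diagNeighbors, if_congr (h _) rfl rfl, if_congr (h (c.2 + 1)) rfl rfl]
  split_ifs <;> decide

theorem even_card_filter_diagNeighbors_of_snd (h : ∀ a, P (a, c.2 - 1) ↔ P (a, c.2 + 1)) :
    Even #{d ∈ diagNeighbors c | P d} := by
  rw [card_filter_diagNeighbors, if_congr (h _) rfl rfl, if_congr (h (c.1 + 1)) rfl rfl]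
  split_ifs <;> decide

theorem even_card_filter_diagNeighbors_of_antidiag
    (h₁ : P (c.1 - 1, c.2 - 1) ↔ P (c.1 + 1, c.2 + 1))
    (h₂ : P (c.1 - 1, c.2 + 1) ↔ P (c.1 + 1, c.2 - 1)) :
    Even #{d ∈ diagNeighbors c | P d} := by
  rw [card_filter_diagNeighbors, if_congr h₁ rfl rfl, if_congr h₂ rfl rfl]
  split_ifs <;> decide

end Diagonal

section ExactWalk

open Finset SimpleGraph
open scoped Classical

variable {α β : ℕ → ℕ} {s t : ℕ}

theorem IsWalk.apply_ne {f : ℕ → ℕ} {n : ℕ} (hf : IsWalk f n) {i j : ℕ} (hi : 1 ≤ i)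
    (hj : 1 ≤ j) (hin : i ≤ n) (hjn : j ≤ n) (hij : Nat.dist i j = 1) : f i ≠ f j := by
  intro h
  rcases (show j = i + 1 ∨ i = j + 1 by simp only [Nat.dist] at hij; omega) with rfl | rfl
  · simpa [h] using hf i hi hjn
  · simpa [h] using hf j hj hin

theorem IsWalk.dist_eq_one_of_adj (hα : IsWalk α s) (hβ : IsWalk β t) {c d : ℕ × ℕ}
    (h : (blackGraph α β s t).Adj c d) : Nat.dist c.1 d.1 = 1 ∧ Nat.dist c.2 d.2 = 1 := by
  obtain ⟨c1, c2⟩ := c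
  obtain ⟨d1, d2⟩ := d
  obtain ⟨⟨⟨hc1, hcs, hc2, hct⟩, hc⟩, ⟨⟨hd1, hds, hd2, hdt⟩, hd⟩, hne, h1, h2⟩ := h
  simp only [Ne, Prod.ext_iff, Nat.dist] at hne h1 h2 hc hd ⊢
  constructor
  · by_contra h0
    exact hβ.apply_ne hc2 hd2 hct hdt (by simp only [Nat.dist]; omega)
      (by rw [← hc, ← hd, show c1 = d1 by omega])
  · by_contra h0
    exact hα.apply_ne hc1 hd1 hcs hds (by simp only [Nat.dist]; omega)
      (by rw [hc, hd, show c2 = d2 by omega])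

noncomputable instance (s t : ℕ) : Fintype (board s t) :=
  Fintype.ofFinset (Icc 1 s ×ˢ Icc 1 t) fun c => by simp [board, and_assoc]

theorem degree_induce_board (hα : IsWalk α s) (hβ : IsWalk β t) {c : ℕ × ℕ}
    (hc : Black α β s t c) : ((blackGraph α β s t).induce (board s t)).degree ⟨c, hc.1⟩ =
      #{d ∈ diagNeighbors c | Black α β s t d} := by
  rw [← card_neighborFinset_eq_degree, ← card_map (Function.Embedding.subtype _)]
  congr 1
  ext d
  simp only [mem_map, mem_neighborFinset, comap_adj, Function.Embedding.subtype_apply,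
    Subtype.exists, exists_and_right, exists_eq_right, mem_filter]
  constructor
  · rintro ⟨-, hcd⟩
    have := hα.dist_eq_one_of_adj hβ hcd
    refine ⟨?_, hcd.2.1⟩
    simp only [diagNeighbors, mem_insert, mem_singleton, Prod.ext_iff, Nat.dist] at this ⊢
    omega
  · rintro ⟨hd, hdb⟩
    refine ⟨hdb.1, hc, hdb, ?_⟩
    obtain ⟨hc1, -, hc2, -⟩ := hc.1
    simp only [diagNeighbors, mem_insert, mem_singleton, Prod.ext_iff] at hd
    simp only [adj8, Nat.dist, Ne, Prod.ext_iff]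
    omega

theorem even_card_black_diagNeighbors_of_fst {i j : ℕ} (h2 : 2 ≤ i) (hs : i + 1 ≤ s)
    (h : α (i - 1) = α (i + 1)) : Even #{d ∈ diagNeighbors (i, j) | Black α β s t d} :=
  even_card_filter_diagNeighbors_of_fst fun b => by
    simp only [Black, board, Set.mem_ofPred_eq, h]
    omega

theorem even_card_black_diagNeighbors_of_snd {i j : ℕ} (h2 : 2 ≤ j) (ht : j + 1 ≤ t)
    (h : β (j - 1) = β (j + 1)) : Even #{d ∈ diagNeighbors (i, j) | Black α β s t d} :=
  even_card_filter_diagNeighbors_of_snd fun a => by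
    simp only [Black, board, Set.mem_ofPred_eq, h]
    omega

theorem even_card_black_diagNeighbors_of_antidiag (hα : IsWalk α s) (hβ : IsWalk β t)
    {i j : ℕ} (h2i : 2 ≤ i) (hs : i + 1 ≤ s) (h2j : 2 ≤ j) (ht : j + 1 ≤ t) (hij : α i = β j)
    (hαi : α (i - 1) ≠ α (i + 1)) (hβj : β (j - 1) ≠ β (j + 1)) :
    Even #{d ∈ diagNeighbors (i, j) | Black α β s t d} := by
  have h₁ := hα i (by omega) hs
  have h₂ := hα.dist_pred h2i (by omega)
  have h₃ := hβ j (by omega) ht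
  have h₄ := hβ.dist_pred h2j (by omega)
  simp only [Nat.dist] at h₁ h₂ h₃ h₄
  refine even_card_filter_diagNeighbors_of_antidiag ?_ ?_ <;>
    simp only [Black, board, Set.mem_ofPred_eq] <;> omega

theorem even_card_black_diagNeighbors (hα : IsWalk α s) (hβ : IsWalk β t) (hα1 : α 1 = 1)
    (hβ1 : β 1 = 1) (hαpos : ∀ i ∈ Icc 1 s, 1 ≤ α i) (hβpos : ∀ j ∈ Icc 1 t, 1 ≤ β j)
    (hβmax : ∀ j ∈ Icc 1 t, β j ≤ α s) {c : ℕ × ℕ} (hc : Black α β s t c) (hc11 : c ≠ (1, 1))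
    (hct : c.2 < t) : Even #{d ∈ diagNeighbors c | Black α β s t d} := by
  obtain ⟨i, j⟩ := c
  obtain ⟨⟨hi1, his, hj1, hjt⟩, hij⟩ := hc
  simp only [Ne, Prod.ext_iff] at hc11 hct hij hi1 his hj1 hjt
  simp only [mem_Icc] at hαpos hβpos hβmax
  rcases Nat.lt_or_ge j 2 with hj | hj
  · obtain rfl : j = 1 := by omega
    have hβ2 : Nat.dist (β 2) (β 1) = 1 := hβ 1 le_rfl hct
    have := hβpos 2 ⟨by omega, hct⟩
    have := hβmax 2 ⟨by omega, hct⟩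
    rcases (show i = s ∨ i + 1 ≤ s by omega) with rfl | hs
    · simp only [Nat.dist] at hβ2
      omega
    have h₁ := hα i (by omega) hs
    have h₂ := hα.dist_pred (k := i) (by omega) (by omega)
    have := hαpos (i - 1) ⟨by omega, by omega⟩
    have := hαpos (i + 1) ⟨by omega, hs⟩
    simp only [Nat.dist] at h₁ h₂
    exact even_card_black_diagNeighbors_of_fst (by omega) hs (by omega)
  by_cases hβj : β (j - 1) = β (j + 1)
  · exact even_card_black_diagNeighbors_of_snd hj hct hβj
  have h₁ := hβ j (by omega) hct
  have h₂ := hβ.dist_pred hj (by omega)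
  have := hβpos (j - 1) ⟨by omega, by omega⟩
  have := hβpos (j + 1) ⟨by omega, hct⟩
  have := hβmax (j - 1) ⟨by omega, by omega⟩
  have := hβmax (j + 1) ⟨by omega, hct⟩
  simp only [Nat.dist] at h₁ h₂
  have hi : 2 ≤ i := by
    by_contra
    obtain rfl : i = 1 := by omega
    omega
  have hs : i + 1 ≤ s := by
    by_contra
    obtain rfl : i = s := by omega
    omega
  by_cases hαi : α (i - 1) = α (i + 1)
  · exact even_card_black_diagNeighbors_of_fst hi hs hαi
  exact even_card_black_diagNeighbors_of_antidiag hα hβ hi hs hj hct hij hαi hβj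

theorem exists_reachable_top_of_isWalk (hα : IsWalk α s) (hβ : IsWalk β t) (hα1 : α 1 = 1)
    (hβ1 : β 1 = 1) (hs : 1 ≤ s) (ht : 1 ≤ t) (hαpos : ∀ i ∈ Icc 1 s, 1 ≤ α i)
    (hβpos : ∀ j ∈ Icc 1 t, 1 ≤ β j) (hβmax : ∀ j ∈ Icc 1 t, β j ≤ α s) :
    ∃ c : ℕ × ℕ, c.2 = t ∧ (blackGraph α β s t).Reachable (1, 1) c := by
  obtain rfl | ht2 := (show t = 1 ∨ 2 ≤ t by omega)
  · exact ⟨(1, 1), rfl, .rfl⟩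
  have hβ2 : β 2 = 2 := by
    have h12 : Nat.dist (β 2) (β 1) = 1 := hβ 1 le_rfl ht2
    have := hβpos 2 (mem_Icc.2 ⟨by omega, ht2⟩)
    simp only [Nat.dist, hβ1] at h12
    omega
  have hs2 : 2 ≤ s := by
    by_contra h
    obtain rfl : s = 1 := by omega
    have := hβmax 2 (mem_Icc.2 ⟨by omega, ht2⟩)
    omega
  have hα2 : α 2 = 2 := by
    have h12 : Nat.dist (α 2) (α 1) = 1 := hα 1 le_rfl hs2
    have := hαpos 2 (mem_Icc.2 ⟨by omega, hs2⟩)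
    simp only [Nat.dist, hα1] at h12
    omega
  have h11 : Black α β s t (1, 1) := ⟨⟨le_rfl, hs, le_rfl, ht⟩, hα1.trans hβ1.symm⟩
  have hodd : Odd (((blackGraph α β s t).induce (board s t)).degree ⟨(1, 1), h11.1⟩) := by
    rw [degree_induce_board hα hβ h11, card_filter_diagNeighbors]
    simp [Black, board, hα2, hβ2, hs2, ht2]
  obtain ⟨⟨w, hw⟩, hw11, hreach, hwodd⟩ := exists_reachable_ne_odd_degree _ hodd
  obtain ⟨u, hwu⟩ := (degree_pos_iff_exists_adj _ _).1 hwodd.pos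
  have hwb : Black α β s t w := hwu.1
  refine ⟨w, ?_, hreach.map (Embedding.induce _).toHom⟩
  by_contra hwt
  rw [degree_induce_board hα hβ hwb] at hwodd
  exact Nat.not_even_iff_odd.2 hwodd <| even_card_black_diagNeighbors hα hβ hα1 hβ1 hαpos
    hβpos hβmax hwb (fun h => hw11 (Subtype.ext h)) (lt_of_le_of_ne hwb.1.2.2.2 hwt)

theorem exists_reachable_top_of_isWalk_of_range (hα : IsWalk α s) (hβ : IsWalk β t)
    (hα1 : α 1 = 1) (hβ1 : β 1 = 1) (ht : 1 ≤ t) (hαpos : ∀ i ∈ Icc 1 s, 1 ≤ α i)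
    (hrng : ∀ j ∈ Icc 1 t, ∃ i ∈ Icc 1 s, α i = β j) :
    ∃ c : ℕ × ℕ, c.2 = t ∧ (blackGraph α β s t).Reachable (1, 1) c := by
  obtain ⟨i₀, hi₀, -⟩ := hrng 1 (mem_Icc.2 ⟨le_rfl, ht⟩)
  obtain ⟨m, hm, hmax⟩ := exists_max_image (Icc 1 s) α ⟨i₀, hi₀⟩
  have hms := mem_Icc.1 hm
  have hIcc : Icc 1 m ⊆ Icc 1 s := Icc_subset_Icc le_rfl hms.2
  obtain ⟨c, hct, hc⟩ := exists_reachable_top_of_isWalk (hα.mono hms.2) hβ hα1 hβ1 hms.1 ht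
    (fun i hi => hαpos i (hIcc hi))
    (fun j hj => by obtain ⟨i, hi, hij⟩ := hrng j hj; exact hij ▸ hαpos i hi)
    (fun j hj => by obtain ⟨i, hi, hij⟩ := hrng j hj; exact hij ▸ hmax i hi)
  exact ⟨c, hct, hc.mono (blackGraph_mono hms.2)⟩

end ExactWalk

section Reduction

open Finset

variable {α β : ℕ → ℕ} {s t p : ℕ}

theorem exists_reachable_top_of_comp_succAbove_fst (hp1 : 1 ≤ p) (hp : α (p + 1) = α p)
    (h : ∃ c : ℕ × ℕ, c.2 = t ∧
      (blackGraph (α ∘ succAbove (p + 1)) β (s - 1) t).Reachable (1, 1) c) :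
    ∃ c : ℕ × ℕ, c.2 = t ∧ (blackGraph α β s t).Reachable (1, 1) c := by
  obtain ⟨c, hct, hc⟩ := h
  have h1 : succAbove (p + 1) 1 = 1 := if_pos (by omega)
  exact ⟨Prod.map (succAbove (p + 1)) id c, hct,
    by simpa [h1] using reachable_comp_succAbove hp hc⟩

theorem exists_reachable_top_of_comp_succAbove_snd (hp1 : 1 ≤ p) (hpt : p + 1 ≤ t)
    (hp : β (p + 1) = β p) (h11 : Black α β s t (1, 1))
    (h : ∃ c : ℕ × ℕ, c.2 = t - 1 ∧
      (blackGraph α (β ∘ succAbove (p + 1)) s (t - 1)).Reachable (1, 1) c) :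
    ∃ c : ℕ × ℕ, c.2 = t ∧ (blackGraph α β s t).Reachable (1, 1) c := by
  obtain ⟨⟨i, j⟩, rfl, hc⟩ := h
  have h1 : succAbove (p + 1) 1 = 1 := if_pos (by omega)
  have hc' : (blackGraph α β s t).Reachable (1, 1) (i, succAbove (p + 1) (t - 1)) := by
    simpa [h1] using reachable_comp_succAbove_snd hp hc
  rcases (show p + 1 < t ∨ p + 1 = t by omega) with hlt | rfl
  · refine ⟨_, ?_, hc'⟩
    simp only [succAbove]
    split_ifs <;> omega
  · -- the deleted row was the last one, so the lifted path stops one row short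
    have hend : succAbove (p + 1) (p + 1 - 1) = p := if_pos (by omega)
    rw [hend] at hc'
    have hb := Black.of_reachable hc' h11
    have hb' : Black α β s (p + 1) (i, p + 1) :=
      ⟨⟨hb.1.1, hb.1.2.1, by omega, le_rfl⟩, hb.2.trans hp.symm⟩
    exact ⟨(i, p + 1), rfl, hc'.trans (SimpleGraph.Adj.reachable
      ⟨hb, hb', by simp [adj8, Nat.dist]⟩)⟩

theorem exists_reachable_top (hα : IsLazyWalk α s) (hβ : IsLazyWalk β t) (hα1 : α 1 = 1)
    (hβ1 : β 1 = 1) (ht : 1 ≤ t) (hαpos : ∀ i ∈ Icc 1 s, 1 ≤ α i)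
    (hrng : ∀ j ∈ Icc 1 t, ∃ i ∈ Icc 1 s, α i = β j) :
    ∃ c : ℕ × ℕ, c.2 = t ∧ (blackGraph α β s t).Reachable (1, 1) c := by
  induction hn : s + t using Nat.strong_induction_on generalizing α β s t with
  | _ n ih =>
  by_cases hpα : ∃ p, 1 ≤ p ∧ p + 1 ≤ s ∧ α (p + 1) = α p
  · obtain ⟨p, hp1, hps, hp⟩ := hpα
    refine exists_reachable_top_of_comp_succAbove_fst hp1 hp <|
      ih (s - 1 + t) (by omega) (hα.comp_succAbove hp) hβ ?_ hβ1 ht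
        (fun k hk => hαpos _ (succAbove_mem_Icc hk)) (fun j hj => ?_) rfl
    · simpa [succAbove, show 1 < p + 1 by omega] using hα1
    · obtain ⟨i, hi, hij⟩ := hrng j hj
      obtain ⟨k, hk, hki⟩ := exists_succAbove_eq hp hp1 hps hi
      exact ⟨k, hk, hki.trans hij⟩
  by_cases hpβ : ∃ p, 1 ≤ p ∧ p + 1 ≤ t ∧ β (p + 1) = β p
  · obtain ⟨p, hp1, hpt, hp⟩ := hpβ
    obtain ⟨i₀, hi₀, -⟩ := hrng 1 (mem_Icc.2 ⟨le_rfl, ht⟩)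
    refine exists_reachable_top_of_comp_succAbove_snd hp1 hpt hp
      ⟨⟨le_rfl, (mem_Icc.1 hi₀).1.trans (mem_Icc.1 hi₀).2, le_rfl, ht⟩, hα1.trans hβ1.symm⟩ <|
      ih (s + (t - 1)) (by omega) hα (hβ.comp_succAbove hp) hα1 ?_ (by omega) hαpos
        (fun j hj => hrng _ (succAbove_mem_Icc hj)) rfl
    simpa [succAbove, show 1 < p + 1 by omega] using hβ1
  push Not at hpα hpβ
  exact exists_reachable_top_of_isWalk_of_range (hα.isWalk hpα) (hβ.isWalk hpβ) hα1 hβ1 ht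
    hαpos hrng

end Reduction

theorem black_path_corner_to_side_general (r s t : ℕ) (hs : 1 ≤ s) (ht : 1 ≤ t)
    (α β : ℕ → ℕ)
    (hαmem : ∀ i ∈ Finset.Icc 1 s, α i ∈ Finset.Icc 1 r)
    (hαstep : ∀ i, 1 ≤ i → i + 1 ≤ s → Nat.dist (α (i + 1)) (α i) ≤ 1)
    (hβstep : ∀ j, 1 ≤ j → j + 1 ≤ t → Nat.dist (β (j + 1)) (β j) ≤ 1)
    (hα1 : α 1 = 1) (hβ1 : β 1 = 1)
    (hrng : ∀ j ∈ Finset.Icc 1 t, ∃ i ∈ Finset.Icc 1 s, α i = β j) :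
    PathBetween adj8 (fun c => c ∈ board s t ∧ α c.1 = β c.2)
      {((1 : ℕ), (1 : ℕ))} {c | c.2 = t} := by
  obtain ⟨c, hct, hc⟩ := exists_reachable_top hαstep hβstep hα1 hβ1 ht
    (fun i hi => (Finset.mem_Icc.1 (hαmem i hi)).1) hrng
  exact pathBetween_of_reachable hc ⟨⟨le_rfl, hs, le_rfl, ht⟩, hα1.trans hβ1.symm⟩ hct

/-- If `α : [s] → [r]` and `β : [t] → [r]` are relation-preserving,
`α 1 = 1`, `β 1 = 1` and `rng β ⊆ rng α`, then in the chessboard `[s]×[t]`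
colored black at `(i,j)` iff `α i = β j` there is a black 8-path from `(1,1)`
to the top side `[s]×{t}`. -/
theorem black_path_corner_to_side (r s t : ℕ) (hr : 1 ≤ r) (hs : 1 ≤ s) (ht : 1 ≤ t)
    (α β : ℕ → ℕ)
    (hαmem : ∀ i ∈ Finset.Icc 1 s, α i ∈ Finset.Icc 1 r)
    (hβmem : ∀ j ∈ Finset.Icc 1 t, β j ∈ Finset.Icc 1 r)
    (hαstep : ∀ i, 1 ≤ i → i + 1 ≤ s → Nat.dist (α (i + 1)) (α i) ≤ 1)
    (hβstep : ∀ j, 1 ≤ j → j + 1 ≤ t → Nat.dist (β (j + 1)) (β j) ≤ 1)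
    (hα1 : α 1 = 1) (hβ1 : β 1 = 1)
    (hrng : ∀ j ∈ Finset.Icc 1 t, ∃ i ∈ Finset.Icc 1 s, α i = β j) :
    PathBetween adj8 (fun c => c ∈ board s t ∧ α c.1 = β c.2)
      {((1 : ℕ), (1 : ℕ))} {c | c.2 = t} :=
  black_path_corner_to_side_general r s t hs ht α β hαmem hαstep hβstep hα1 hβ1 hrng
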